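/- Let x⁽ℓ⁾, y⁽ℓ⁾ ∈ ℝ^{I_ℓ}, ℓ = 1,2,3, with each pair {x⁽ℓ⁾, y⁽ℓ⁾} linearly independent. Define T = x⁽¹⁾⊗x⁽²⁾⊗y⁽³⁾ + x⁽¹⁾⊗y⁽²⁾⊗x⁽³⁾ + y⁽¹⁾⊗x⁽²⁾⊗x⁽³⁾ and T⁽ⁿ⁾ = n(x⁽¹⁾ + (1/n)y⁽¹⁾)⊗(x⁽²⁾ + (1/n)y⁽²⁾)⊗(x⁽³⁾ + (1/n)y⁽³⁾) − n x⁽¹⁾⊗x⁽²⁾⊗x⁽³⁾. Then the sequence T⁽ⁿ⁾ converges to T (in Frobenius norm) as n → ∞, and each T⁽ⁿ⁾ has rank at most 2. -/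
import Mathlib


open Filter Topology

/-- `T` has rank at most `R`: it is a sum of `R` elementary (rank-one) tensors. -/
def hasRankLE {L : ℕ} {I : Fin L → ℕ}
    (T : ((l : Fin L) → Fin (I l)) → ℝ) (R : ℕ) : Prop :=
  ∃ v : Fin R → (l : Fin L) → Fin (I l) → ℝ,
    ∀ i, T i = ∑ r, ∏ l, v r l (i l)

/-- (de Silva–Lim) With `{x⁽ℓ⁾, y⁽ℓ⁾}` linearly independent for each mode, the tensors
`T⁽ⁿ⁾ = n(x⁽¹⁾+y⁽¹⁾/n)⊗(x⁽²⁾+y⁽²⁾/n)⊗(x⁽³⁾+y⁽³⁾/n) − n x⁽¹⁾⊗x⁽²⁾⊗x⁽³⁾` each have rank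
at most 2 and converge (in Frobenius norm) to
`T = x⁽¹⁾⊗x⁽²⁾⊗y⁽³⁾ + x⁽¹⁾⊗y⁽²⁾⊗x⁽³⁾ + y⁽¹⁾⊗x⁽²⁾⊗x⁽³⁾`. -/
theorem stmt_8 (I : Fin 3 → ℕ) (hI : ∀ l, 2 ≤ I l)
    (x y : (l : Fin 3) → Fin (I l) → ℝ)
    (hxy : ∀ l, LinearIndependent ℝ ![x l, y l])
    (T : ((l : Fin 3) → Fin (I l)) → ℝ)
    (hT : ∀ i, T i = x 0 (i 0) * x 1 (i 1) * y 2 (i 2)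
        + x 0 (i 0) * y 1 (i 1) * x 2 (i 2)
        + y 0 (i 0) * x 1 (i 1) * x 2 (i 2))
    (Tn : ℕ → ((l : Fin 3) → Fin (I l)) → ℝ)
    (hTn : ∀ n i, Tn n i =
        (n : ℝ) * ((x 0 (i 0) + (1 / (n : ℝ)) * y 0 (i 0))
          * (x 1 (i 1) + (1 / (n : ℝ)) * y 1 (i 1))
          * (x 2 (i 2) + (1 / (n : ℝ)) * y 2 (i 2)))
        - (n : ℝ) * (x 0 (i 0) * x 1 (i 1) * x 2 (i 2))) :
    (∀ n, hasRankLE (Tn n) 2) ∧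
    Tendsto (fun n => Real.sqrt (∑ i : (l : Fin 3) → Fin (I l), (Tn n i - T i) ^ 2))
      atTop (𝓝 0) := by
  constructor
  · intro n
    refine ⟨fun r l j =>
      if r = 0 then (if (l : ℕ) = 0 then (n : ℝ) else 1) * (x l j + (1 / (n : ℝ)) * y l j)
      else (if (l : ℕ) = 0 then -(n : ℝ) else 1) * x l j, ?_⟩
    intro i
    rw [hTn]
    rw [Fin.sum_univ_two, Fin.prod_univ_three, Fin.prod_univ_three]
    norm_num
    ring
  · have key : ∀ i, Tendsto (fun n : ℕ => Tn n i - T i) atTop (𝓝 0) := by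
      intro i
      have heq : ∀ᶠ n : ℕ in atTop, (1 / (n : ℝ)) *
          (x 0 (i 0) * y 1 (i 1) * y 2 (i 2) + y 0 (i 0) * x 1 (i 1) * y 2 (i 2)
            + y 0 (i 0) * y 1 (i 1) * x 2 (i 2))
          + (1 / (n : ℝ))^2 * (y 0 (i 0) * y 1 (i 1) * y 2 (i 2)) = Tn n i - T i := by
        filter_upwards [eventually_ge_atTop 1] with n hn
        have hn0 : (n : ℝ) ≠ 0 := by positivity
        rw [hTn, hT]
        field_simp
        ring
      refine Tendsto.congr' heq ?_
      have h1 : Tendsto (fun n : ℕ => (1 / (n : ℝ))) atTop (𝓝 0) :=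
        tendsto_one_div_atTop_nhds_zero_nat
      have h2 := (h1.mul_const (x 0 (i 0) * y 1 (i 1) * y 2 (i 2)
          + y 0 (i 0) * x 1 (i 1) * y 2 (i 2) + y 0 (i 0) * y 1 (i 1) * x 2 (i 2))).add
        ((h1.pow 2).mul_const (y 0 (i 0) * y 1 (i 1) * y 2 (i 2)))
      simpa using h2
    have hsum : Tendsto (fun n => ∑ i : (l : Fin 3) → Fin (I l), (Tn n i - T i) ^ 2)
        atTop (𝓝 0) := by
      have : Tendsto (fun n => ∑ i : (l : Fin 3) → Fin (I l), (Tn n i - T i) ^ 2)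
          atTop (𝓝 (∑ i : (l : Fin 3) → Fin (I l), (0:ℝ))) := by
        refine tendsto_finset_sum _ fun i _ => ?_
        simpa using (key i).pow 2
      simpa using this
    have := hsum.sqrt
    simpa using this
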